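/- Let S be a data independent memory system all of whose traces are causal, and fix n,m ≥ 1. Then every trace of S(n,m) is sequentially consistent if and only if there exists a witness Ω such that the constraint graph G(Ω)(τ) is acyclic for every unambiguous trace τ of S(n,m). -/

import Mathlib

/-- A memory operation: read or write. -/
inductive MemOp : Type
  | R : MemOp
  | W : MemOp
deriving DecidableEq

/-- A memory event ⟨op, proc, loc, data⟩. -/
structure MemEvent : Type where
  op : MemOp
  proc : ℕ
  loc : ℕ
  data : ℕ
deriving DecidableEq

instance : Inhabited MemEvent := ⟨⟨MemOp.R, 1, 1, 0⟩⟩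

/-- A trace is a finite sequence of memory events (1-indexed via `ev`). -/
abbrev MTrace := List MemEvent

/-- The x-th event of a trace (1-indexed). -/
def ev (τ : MTrace) (x : ℕ) : MemEvent := τ.getD (x - 1) default

/-- dom(τ) = {1, …, |τ|}. -/
def Dom (τ : MTrace) : Set ℕ := {x | 1 ≤ x ∧ x ≤ τ.length}

/-- P(τ,i): indices of events of processor i. -/
def Pset (τ : MTrace) (i : ℕ) : Set ℕ := {x | x ∈ Dom τ ∧ (ev τ x).proc = i}

/-- L(τ,j): indices of events to location j. -/
def Lset (τ : MTrace) (j : ℕ) : Set ℕ := {x | x ∈ Dom τ ∧ (ev τ x).loc = j}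

/-- L^w(τ,j): indices of write events to location j. -/
def Lw (τ : MTrace) (j : ℕ) : Set ℕ := {x | x ∈ Lset τ j ∧ (ev τ x).op = MemOp.W}

/-- L^r(τ,j): indices of read events to location j. -/
def Lr (τ : MTrace) (j : ℕ) : Set ℕ := {x | x ∈ Lset τ j ∧ (ev τ x).op = MemOp.R}

/-- A trace is unambiguous if every write event has a nonzero data value distinct
from that of every other write event to the same location. -/
def Unambiguous (τ : MTrace) : Prop :=
  ∀ j, ∀ x ∈ Lw τ j, (ev τ x).data ≠ 0 ∧
    ∀ y ∈ Lw τ j, y ≠ x → (ev τ y).data ≠ (ev τ x).data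

/-- A trace is causal if the data value of every read event is 0 or equals the data
value of some write event to the same location. -/
def Causal (τ : MTrace) : Prop :=
  ∀ j, ∀ x ∈ Lr τ j, (ev τ x).data = 0 ∨ ∃ y ∈ Lw τ j, (ev τ y).data = (ev τ x).data

/-- ⟨x,y⟩ ∈ M(τ,i): the total order on P(τ,i) given by index order. -/
def Mrel (τ : MTrace) (i : ℕ) (x y : ℕ) : Prop :=
  x ∈ Pset τ i ∧ y ∈ Pset τ i ∧ x < y

/-- A sequence of memory events (given by its length and 1-indexed access function)
is serial: each event's data value equals that of the latest write to the same
location at an index no larger than its own, and equals 0 if no such write exists. -/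
def SerialFn (len : ℕ) (e : ℕ → MemEvent) : Prop :=
  ∀ u, 1 ≤ u → u ≤ len →
    ((∀ k, 1 ≤ k → k ≤ u → ¬((e k).op = MemOp.W ∧ (e k).loc = (e u).loc)) →
       (e u).data = 0) ∧
    (∀ k, 1 ≤ k → k ≤ u → (e k).op = MemOp.W → (e k).loc = (e u).loc →
       (∀ k', k < k' → k' ≤ u → ¬((e k').op = MemOp.W ∧ (e k').loc = (e u).loc)) →
       (e u).data = (e k).data)

/-- f (with inverse g) is a permutation of {1,…,|τ|} satisfying conditions C1 and C2. -/
def IsSCWitness (τ : MTrace) (f g : ℕ → ℕ) : Prop :=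
  (∀ u ∈ Dom τ, f u ∈ Dom τ) ∧
  (∀ u ∈ Dom τ, g u ∈ Dom τ) ∧
  (∀ u ∈ Dom τ, g (f u) = u) ∧
  (∀ u ∈ Dom τ, f (g u) = u) ∧
  (∀ i u v, Mrel τ i u v → f u < f v) ∧
  SerialFn τ.length (fun x => ev τ (g x))

/-- A trace is sequentially consistent if some permutation satisfies C1 and C2. -/
def SeqConsistent (τ : MTrace) : Prop := ∃ f g, IsSCWitness τ f g

/-- A witness assigns to each trace and location a strict total order on L^w(τ,j). -/
def IsWitness (Ω : MTrace → ℕ → ℕ → ℕ → Prop) : Prop :=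
  ∀ τ j,
    (∀ x y, Ω τ j x y → x ∈ Lw τ j ∧ y ∈ Lw τ j) ∧
    (∀ x, ¬ Ω τ j x x) ∧
    (∀ x y z, Ω τ j x y → Ω τ j y z → Ω τ j x z) ∧
    (∀ x y, x ∈ Lw τ j → y ∈ Lw τ j → x ≠ y → Ω τ j x y ∨ Ω τ j y x)

/-- A witness is simple if it orders the writes to each location by index order. -/
def IsSimple (Ω : MTrace → ℕ → ℕ → ℕ → Prop) : Prop :=
  ∀ τ j x y, Ω τ j x y ↔ (x ∈ Lw τ j ∧ y ∈ Lw τ j ∧ x < y)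

/-- ⟨x,y⟩ ∈ Ω^e(τ,j): the extension of the witness order to all events to location j. -/
def OmegaE (Ω : MTrace → ℕ → ℕ → ℕ → Prop) (τ : MTrace) (j x y : ℕ) : Prop :=
  x ∈ Lset τ j ∧ y ∈ Lset τ j ∧
  (((ev τ x).data = (ev τ y).data ∧ (ev τ x).op = MemOp.W ∧ (ev τ y).op = MemOp.R) ∨
   ((ev τ x).data = 0 ∧ (ev τ y).data ≠ 0) ∨
   (∃ a b, a ∈ Lw τ j ∧ b ∈ Lw τ j ∧ Ω τ j a b ∧
      (ev τ a).data = (ev τ x).data ∧ (ev τ b).data = (ev τ y).data))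

/-- Edge of the constraint graph G(Ω)(τ): union of the M(τ,i) and the Ω^e(τ,j). -/
def GEdge (Ω : MTrace → ℕ → ℕ → ℕ → Prop) (τ : MTrace) (x y : ℕ) : Prop :=
  (∃ i, Mrel τ i x y) ∨ (∃ j, OmegaE Ω τ j x y)

/-- The constraint graph G(Ω)(τ) has a cycle. -/
def HasCycle (Ω : MTrace → ℕ → ℕ → ℕ → Prop) (τ : MTrace) : Prop :=
  ∃ x, Relation.TransGen (GEdge Ω τ) x x

/-- The constraint graph G(Ω)(τ) is acyclic. -/
def Acyclic (Ω : MTrace → ℕ → ℕ → ℕ → Prop) (τ : MTrace) : Prop :=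
  ¬ HasCycle Ω τ

/-- All events of the trace have processor in {1,…,n} and location in {1,…,m}. -/
def InRange (n m : ℕ) (τ : MTrace) : Prop :=
  ∀ e ∈ τ, 1 ≤ e.proc ∧ e.proc ≤ n ∧ 1 ≤ e.loc ∧ e.loc ≤ m

/-- All data values in the trace lie in {0,…,v}. -/
def DataBounded (v : ℕ) (τ : MTrace) : Prop := ∀ e ∈ τ, e.data ≤ v

/-- A memory system with n processors and m locations: for each v ≥ 1, a set S(n,m,v)
of traces whose processors, locations, and data values are in range. -/
structure MemSystem (n m : ℕ) : Type where
  S : ℕ → Set MTrace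
  wf : ∀ v, 1 ≤ v → ∀ τ ∈ S v, InRange n m τ ∧ DataBounded v τ

/-- S(n,m): the union of the S(n,m,v) over v ≥ 1. -/
def MemSystem.traces {n m : ℕ} (M : MemSystem n m) : Set MTrace :=
  {τ | ∃ v, 1 ≤ v ∧ τ ∈ M.S v}

/-- A renaming function λ with λ(j,0) = 0 for every location j. -/
def IsRenaming (lam : ℕ → ℕ → ℕ) : Prop := ∀ j, lam j 0 = 0

/-- λ^d: rename the data value of each event according to its location. -/
def renameD (lam : ℕ → ℕ → ℕ) (τ : MTrace) : MTrace :=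
  τ.map fun e => { e with data := lam e.loc e.data }

/-- The memory system is data independent: a trace is in S(n,m,v) iff it is obtained
from an unambiguous trace of S(n,m) by a renaming function with values in {0,…,v}. -/
def DataIndependent {n m : ℕ} (M : MemSystem n m) : Prop :=
  ∀ v, 1 ≤ v → ∀ τ, τ ∈ M.S v ↔
    ∃ τ' lam, τ' ∈ M.traces ∧ Unambiguous τ' ∧ IsRenaming lam ∧
      (∀ j d, lam j d ≤ v) ∧ τ = renameD lam τ'

/-- λ^p: rename the processor of each event. -/
def renameP (lam : ℕ → ℕ) (τ : MTrace) : MTrace :=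
  τ.map fun e => { e with proc := lam e.proc }

/-- λ^l: rename the location of each event. -/
def renameL (lam : ℕ → ℕ) (τ : MTrace) : MTrace :=
  τ.map fun e => { e with loc := lam e.loc }

/-- λ is a permutation of {1,…,n}. -/
def PermOn (n : ℕ) (lam : ℕ → ℕ) : Prop :=
  Set.BijOn lam (Set.Icc 1 n) (Set.Icc 1 n)

/-- The memory system is processor symmetric. -/
def ProcSymmetric {n m : ℕ} (M : MemSystem n m) : Prop :=
  ∀ lam, PermOn n lam → ∀ v τ, τ ∈ M.S v → renameP lam τ ∈ M.S v

/-- The memory system is location symmetric. -/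
def LocSymmetric {n m : ℕ} (M : MemSystem n m) : Prop :=
  ∀ lam, PermOn m lam → ∀ v τ, τ ∈ M.S v → renameL lam τ ∈ M.S v

/-- x ⊕ 1 in the cyclic group {1,…,k} with identity k. -/
def cyc (k x : ℕ) : ℕ := if x = k then 1 else x + 1

/-- A k-nice cycle u_1,v_1,…,u_k,v_k in G(Ω)(τ): distinct vertices; each ⟨u_x,v_x⟩
is a processor edge, each ⟨v_x,u_{x⊕1}⟩ a location edge; no processor (resp.
location) contributes two edges. -/
def NiceCycle (Ω : MTrace → ℕ → ℕ → ℕ → Prop) (τ : MTrace) (k : ℕ)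
    (u v : ℕ → ℕ) : Prop :=
  1 ≤ k ∧
  (∀ x ∈ Set.Icc 1 k, ∀ y ∈ Set.Icc 1 k, x ≠ y → u x ≠ u y) ∧
  (∀ x ∈ Set.Icc 1 k, ∀ y ∈ Set.Icc 1 k, x ≠ y → v x ≠ v y) ∧
  (∀ x ∈ Set.Icc 1 k, ∀ y ∈ Set.Icc 1 k, u x ≠ v y) ∧
  (∀ x ∈ Set.Icc 1 k, ∃ i, Mrel τ i (u x) (v x)) ∧
  (∀ x ∈ Set.Icc 1 k, ∃ j, OmegaE Ω τ j (v x) (u (cyc k x))) ∧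
  (∀ x ∈ Set.Icc 1 k, ∀ y ∈ Set.Icc 1 k, x ≠ y → ∀ i,
     Mrel τ i (u x) (v x) → ¬ Mrel τ i (u y) (v y)) ∧
  (∀ x ∈ Set.Icc 1 k, ∀ y ∈ Set.Icc 1 k, x ≠ y → ∀ j,
     OmegaE Ω τ j (v x) (u (cyc k x)) → ¬ OmegaE Ω τ j (v y) (u (cyc k y)))

/-- A canonical k-nice cycle: a k-nice cycle whose processor edges are in M(τ,x) and
whose location edges are in Ω^e(τ,x⊕1), for x = 1,…,k. -/
def CanonicalNiceCycle (Ω : MTrace → ℕ → ℕ → ℕ → Prop) (τ : MTrace) (k : ℕ)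
    (u v : ℕ → ℕ) : Prop :=
  NiceCycle Ω τ k u v ∧
  (∀ x ∈ Set.Icc 1 k, Mrel τ x (u x) (v x)) ∧
  (∀ x ∈ Set.Icc 1 k, OmegaE Ω τ (cyc k x) (v x) (u (cyc k x)))

/-- The trace satisfies the automaton Constrain_k(j). -/
def ConstrainK (k j : ℕ) (τ : MTrace) : Prop :=
  (j ≤ k →
    (∀ x ∈ Lw τ j, (ev τ x).data ≤ 2) ∧
    (∀ x ∈ Lw τ j, ∀ y ∈ Lw τ j, (ev τ x).data = 1 → (ev τ y).data = 1 → x = y) ∧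
    (∀ x ∈ Lw τ j, ∀ y ∈ Lw τ j, (ev τ x).data = 0 → (ev τ y).data ≠ 0 → x < y) ∧
    (∀ y ∈ Lw τ j, (ev τ y).data = 2 → ∃ x ∈ Lw τ j, (ev τ x).data = 1 ∧ x < y)) ∧
  (k < j → ∀ x ∈ Lw τ j, (ev τ x).data = 0)

/-- The trace satisfies the automaton Check_k(i). -/
def CheckK (k i : ℕ) (τ : MTrace) : Prop :=
  ∃ x ∈ Dom τ, ∃ y ∈ Dom τ, x < y ∧
    (ev τ x).proc = i ∧ (ev τ x).loc = i ∧
    ((ev τ x).data = 1 ∨ (ev τ x).data = 2) ∧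
    (ev τ y).proc = i ∧ (ev τ y).loc = cyc k i ∧
    ((ev τ y).data = 0 ∨ ((ev τ y).op = MemOp.W ∧ (ev τ y).data = 1))

/-!
If `f` serialises `τ`, ordering the writes to each location by `f` is a witness for which every
edge of the constraint graph of an unambiguous `τ` goes forward in `f`: in the serial order every
event sees the latest write before it, which unambiguity identifies from the data value alone.
Conversely, a topological sort `f` of an acyclic constraint graph serialises an unambiguous
causal trace: the write `a` whose value an event `x` carries precedes `x`, and the total witness
order on writes makes any other write before `x` an edge into `a`, so `a` is the latest one.
Data independence presents every trace of the system as a data renaming of an unambiguous one,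
and renaming data values location by location preserves sequential consistency.
-/

open Finset

section TopologicalSort

variable {α : Type*} {r : α → α → Prop}

lemma isPartialOrder_reflTransGen (hr : ∀ x, ¬ Relation.TransGen r x x) :
    IsPartialOrder α (Relation.ReflTransGen r) where
  antisymm a b hab hba := by
    rcases Relation.reflTransGen_iff_eq_or_transGen.1 hab with rfl | hab
    · rfl
    · exact absurd (hab.trans_left hba) (hr a)

section LinearRank

variable (s : α → α → Prop) [IsLinearOrder α s] [DecidableRel s] (S : Finset α)

lemma card_filter_le_lt {x y : α} (hy : y ∈ S) (hxy : s x y) (hne : x ≠ y) :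
    #{z ∈ S | s z x} < #{z ∈ S | s z y} := by
  refine card_lt_card <| (ssubset_iff_of_subset fun z hz => ?_).2 ⟨y, ?_, fun hyx => ?_⟩
  · rw [mem_filter] at hz ⊢
    exact ⟨hz.1, _root_.trans hz.2 hxy⟩
  · exact mem_filter.2 ⟨hy, refl y⟩
  · exact hne (antisymm hxy (mem_filter.1 hyx).2)

lemma bijOn_card_filter_le :
    Set.BijOn (fun x => #{z ∈ S | s z x}) S (Set.Icc 1 #S) := by
  have hinj : Set.InjOn (fun x => #{z ∈ S | s z x}) S := by
    intro x hx y hy hxy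
    by_contra hne
    rcases total_of s x y with h | h
    · exact (card_filter_le_lt s S hy h hne).ne hxy
    · exact (card_filter_le_lt s S hx h (Ne.symm hne)).ne hxy.symm
  have hmaps : Set.MapsTo (fun x => #{z ∈ S | s z x}) S (Set.Icc 1 #S) := fun x hx =>
    ⟨card_pos.2 ⟨x, mem_filter.2 ⟨hx, refl x⟩⟩, card_filter_le S _⟩
  refine ⟨hmaps, hinj, ?_⟩
  rw [← coe_Icc]
  exact surjOn_of_injOn_of_card_le _ (by rwa [coe_Icc]) hinj (by simp)

end LinearRank

theorem exists_bijOn_lt_of_acyclic (S : Finset α) (hr : ∀ x, ¬ Relation.TransGen r x x) :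
    ∃ f : α → ℕ, Set.BijOn f S (Set.Icc 1 #S) ∧ ∀ x y, y ∈ S → r x y → f x < f y := by
  have := isPartialOrder_reflTransGen hr
  obtain ⟨s, hs, hrs⟩ := extend_partialOrder (Relation.ReflTransGen r)
  classical
  refine ⟨fun x => #{z ∈ S | s z x}, bijOn_card_filter_le s S, fun x y hy hxy => ?_⟩
  refine card_filter_le_lt s S hy (hrs _ _ (.single hxy)) ?_
  rintro rfl
  exact hr x (.single hxy)

end TopologicalSort

lemma dom_eq_Icc (τ : MTrace) : Dom τ = Set.Icc 1 τ.length := rfl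

lemma GEdge.mem_dom {Ω : MTrace → ℕ → ℕ → ℕ → Prop} {τ : MTrace} {x y : ℕ}
    (h : GEdge Ω τ x y) : x ∈ Dom τ ∧ y ∈ Dom τ := by
  rcases h with ⟨_, hx, hy, _⟩ | ⟨_, hx, hy, _⟩
  exacts [⟨hx.1, hy.1⟩, ⟨hx.1, hy.1⟩]

lemma acyclic_of_gEdge_lt {Ω : MTrace → ℕ → ℕ → ℕ → Prop} {τ : MTrace} {f : ℕ → ℕ}
    (hf : ∀ x y, GEdge Ω τ x y → f x < f y) : Acyclic Ω τ := by
  rintro ⟨x, hx⟩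
  have := Relation.TransGen.lift (p := (· < ·)) f hf _ _ hx
  rw [Relation.transGen_eq_self] at this
  exact lt_irrefl _ this

/-- `f` orders the events of `τ` serially: this is `SerialFn` for the trace permuted by `f`,
read at the original indices. -/
def IsSerialRank (τ : MTrace) (f : ℕ → ℕ) : Prop :=
  ∀ j, ∀ x ∈ Lset τ j,
    ((∀ w ∈ Lw τ j, f x < f w) → (ev τ x).data = 0) ∧
    (∀ w ∈ Lw τ j, f w ≤ f x → (∀ w' ∈ Lw τ j, f w < f w' → f x < f w') →
      (ev τ x).data = (ev τ w).data)

lemma serialFn_iff_isSerialRank {τ : MTrace} {f g : ℕ → ℕ}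
    (hf : ∀ u ∈ Dom τ, f u ∈ Dom τ) (hg : ∀ u ∈ Dom τ, g u ∈ Dom τ)
    (hgf : ∀ u ∈ Dom τ, g (f u) = u) (hfg : ∀ u ∈ Dom τ, f (g u) = u) :
    SerialFn τ.length (fun k => ev τ (g k)) ↔ IsSerialRank τ f := by
  constructor
  · intro hS j x hx
    obtain ⟨hx1, hx2⟩ := hf x hx.1
    have h := hS (f x) hx1 hx2
    simp only [hgf x hx.1, hx.2] at h
    refine ⟨fun hlate => h.1 fun k hk1 hkx ⟨hop, hloc⟩ => ?_, fun w hw hwx hlast => ?_⟩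
    · have hk : k ∈ Dom τ := ⟨hk1, hkx.trans hx2⟩
      have := hlate (g k) ⟨⟨hg k hk, hloc⟩, hop⟩
      rw [hfg k hk] at this
      omega
    · have hwD := hw.1.1
      have := h.2 (f w) (hf w hwD).1 hwx (by rw [hgf w hwD]; exact hw.2)
        (by rw [hgf w hwD]; exact hw.1.2) fun k hwk hkx ⟨hop, hloc⟩ => ?_
      · rwa [hgf w hwD] at this
      · have hk : k ∈ Dom τ := ⟨(hf w hwD).1.trans hwk.le, hkx.trans hx2⟩
        have := hlast (g k) ⟨⟨hg k hk, hloc⟩, hop⟩ (by rwa [hfg k hk])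
        rw [hfg k hk] at this
        omega
  · intro hS u hu1 hu2
    have hu : u ∈ Dom τ := ⟨hu1, hu2⟩
    obtain ⟨h1, h2⟩ := hS _ (g u) ⟨hg u hu, rfl⟩
    rw [hfg u hu] at h1 h2
    refine ⟨fun hnone => h1 fun w hw => ?_, fun k hk1 hku hop hloc hlast => ?_⟩
    · by_contra! hwu
      have hwD := hw.1.1
      exact hnone (f w) (hf w hwD).1 hwu (by simp only [hgf w hwD]; exact ⟨hw.2, hw.1.2⟩)
    · have hk : k ∈ Dom τ := ⟨hk1, hku.trans hu2⟩
      refine h2 (g k) ⟨⟨hg k hk, hloc⟩, hop⟩ (by rwa [hfg k hk]) fun w hw hkw => ?_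
      rw [hfg k hk] at hkw
      by_contra! hwu
      have hwD := hw.1.1
      exact hlast (f w) hkw hwu (by simp only [hgf w hwD]; exact ⟨hw.2, hw.1.2⟩)

lemma IsSCWitness.isSerialRank {τ : MTrace} {f g : ℕ → ℕ} (h : IsSCWitness τ f g) :
    IsSerialRank τ f :=
  (serialFn_iff_isSerialRank h.1 h.2.1 h.2.2.1 h.2.2.2.1).1 h.2.2.2.2.2

lemma IsSCWitness.injOn {τ : MTrace} {f g : ℕ → ℕ} (h : IsSCWitness τ f g) :
    Set.InjOn f (Dom τ) := fun u hu v hv huv => by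
  rw [← h.2.2.1 u hu, huv, h.2.2.1 v hv]

lemma isSCWitness_invFunOn {τ : MTrace} {f : ℕ → ℕ} (hf : Set.BijOn f (Dom τ) (Dom τ))
    (hM : ∀ i u v, Mrel τ i u v → f u < f v) (hS : IsSerialRank τ f) :
    IsSCWitness τ f (Function.invFunOn f (Dom τ)) := by
  have hinv := hf.invOn_invFunOn
  have hg := hf.surjOn.mapsTo_invFunOn
  exact ⟨hf.mapsTo, hg, fun u hu => hinv.1 hu, fun u hu => hinv.2 hu, hM,
    (serialFn_iff_isSerialRank hf.mapsTo hg (fun u hu => hinv.1 hu) (fun u hu => hinv.2 hu)).2 hS⟩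

lemma Unambiguous.eq_of_data_eq {τ : MTrace} (hU : Unambiguous τ) {j a b : ℕ}
    (ha : a ∈ Lw τ j) (hb : b ∈ Lw τ j) (h : (ev τ a).data = (ev τ b).data) : a = b := by
  by_contra hne
  exact (hU j b hb).2 a ha hne h

namespace IsSerialRank

variable {τ : MTrace} {f : ℕ → ℕ} {j x : ℕ}

lemma exists_latest_write (hS : IsSerialRank τ f) (hx : x ∈ Lset τ j) {w₀ : ℕ}
    (hw₀ : w₀ ∈ Lw τ j) (h : f w₀ ≤ f x) :
    ∃ a ∈ Lw τ j, (ev τ a).data = (ev τ x).data ∧ f a ≤ f x ∧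
      ∀ w ∈ Lw τ j, f a < f w → f x < f w := by
  have hfin : {w ∈ Lw τ j | f w ≤ f x}.Finite :=
    (Set.finite_Icc 1 τ.length).subset fun w hw => hw.1.1.1
  obtain ⟨a, ⟨ha, hax⟩, hmax⟩ := Set.exists_max_image _ f hfin ⟨w₀, hw₀, h⟩
  have hlast : ∀ w ∈ Lw τ j, f a < f w → f x < f w := fun w hw haw => by
    by_contra! hwx
    exact absurd (hmax w ⟨hw, hwx⟩) (not_le.2 haw)
  exact ⟨a, ha, ((hS j x hx).2 a ha hax hlast).symm, hax, hlast⟩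

lemma exists_latest_write_of_ne_zero (hS : IsSerialRank τ f) (hx : x ∈ Lset τ j)
    (hd : (ev τ x).data ≠ 0) :
    ∃ a ∈ Lw τ j, (ev τ a).data = (ev τ x).data ∧ f a ≤ f x ∧
      ∀ w ∈ Lw τ j, f a < f w → f x < f w := by
  by_contra h
  refine hd ((hS j x hx).1 fun w hw => ?_)
  by_contra! hwx
  exact h (hS.exists_latest_write hx hw hwx)

lemma gEdge_lt {Ω : MTrace → ℕ → ℕ → ℕ → Prop} (hS : IsSerialRank τ f)
    (hinj : Set.InjOn f (Dom τ)) (hM : ∀ i u v, Mrel τ i u v → f u < f v)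
    (hU : Unambiguous τ) (hΩ : ∀ j a b, Ω τ j a b → f a < f b) {x y : ℕ}
    (h : GEdge Ω τ x y) : f x < f y := by
  rcases h with ⟨i, hxy⟩ | ⟨j, hx, hy, ⟨hd, hxw, hyr⟩ | ⟨hx0, hy0⟩ | ⟨a, b, ha, hb, hab, hax, hby⟩⟩
  · exact hM i x y hxy
  · have hxW : x ∈ Lw τ j := ⟨hx, hxw⟩
    obtain ⟨a, ha, had, hay, -⟩ := hS.exists_latest_write_of_ne_zero hy (hd ▸ (hU j x hxW).1)
    obtain rfl : a = x := hU.eq_of_data_eq ha hxW (had.trans hd.symm)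
    refine hay.lt_of_ne fun hfay => ?_
    obtain rfl := hinj hx.1 hy.1 hfay
    exact MemOp.noConfusion (hxw.symm.trans hyr)
  · obtain ⟨a, ha, -, hay, -⟩ := hS.exists_latest_write_of_ne_zero hy hy0
    refine lt_of_lt_of_le ?_ hay
    by_contra! hax
    obtain ⟨b, hb, hbd, -⟩ := hS.exists_latest_write hx ha hax
    exact (hU j b hb).1 (hbd.trans hx0)
  · obtain ⟨a', ha', ha'd, -, hlast⟩ :=
      hS.exists_latest_write_of_ne_zero hx (hax ▸ (hU j a ha).1)
    obtain rfl : a' = a := hU.eq_of_data_eq ha' ha (ha'd.trans hax.symm)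
    obtain ⟨b', hb', hb'd, hb'y, -⟩ :=
      hS.exists_latest_write_of_ne_zero hy (hby ▸ (hU j b hb).1)
    obtain rfl : b' = b := hU.eq_of_data_eq hb' hb (hb'd.trans hby.symm)
    exact (hlast b' hb' (hΩ j _ _ hab)).trans_le hb'y

end IsSerialRank

def rankOrder (F : MTrace → ℕ → ℕ) (τ : MTrace) (j x y : ℕ) : Prop :=
  x ∈ Lw τ j ∧ y ∈ Lw τ j ∧ F τ x < F τ y

lemma isWitness_rankOrder {F : MTrace → ℕ → ℕ} (hF : ∀ τ, Set.InjOn (F τ) (Dom τ)) :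
    IsWitness (rankOrder F) := fun τ _ =>
  ⟨fun _ _ h => ⟨h.1, h.2.1⟩, fun _ h => lt_irrefl _ h.2.2,
    fun _ _ _ h₁ h₂ => ⟨h₁.1, h₂.2.1, h₁.2.2.trans h₂.2.2⟩,
    fun _ _ hx hy hne => (lt_or_gt_of_ne fun h => hne (hF τ hx.1.1 hy.1.1 h)).imp
      (fun h => ⟨hx, hy, h⟩) fun h => ⟨hy, hx, h⟩⟩

open Classical in
/-- The identity on traces that are not sequentially consistent, so that it is injective on
every domain. -/
noncomputable def scRank (τ : MTrace) : ℕ → ℕ :=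
  if h : SeqConsistent τ then h.choose else id

lemma exists_isSCWitness_scRank {τ : MTrace} (h : SeqConsistent τ) :
    ∃ g, IsSCWitness τ (scRank τ) g := by
  rw [scRank, dif_pos h]
  exact h.choose_spec

lemma injOn_scRank (τ : MTrace) : Set.InjOn (scRank τ) (Dom τ) := by
  by_cases h : SeqConsistent τ
  · obtain ⟨g, hw⟩ := exists_isSCWitness_scRank h
    exact hw.injOn
  · rw [scRank, dif_neg h]
    exact Function.injective_id.injOn

lemma acyclic_rankOrder_scRank {τ : MTrace} (h : SeqConsistent τ) (hU : Unambiguous τ) :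
    Acyclic (rankOrder scRank) τ := by
  obtain ⟨g, hw⟩ := exists_isSCWitness_scRank h
  exact acyclic_of_gEdge_lt fun x y =>
    hw.isSerialRank.gEdge_lt hw.injOn hw.2.2.2.2.1 hU fun _ _ _ hab => hab.2.2

section Acyclic

variable {Ω : MTrace → ℕ → ℕ → ℕ → Prop} {τ : MTrace} {f : ℕ → ℕ}

lemma exists_write_le_of_gEdge_lt (hC : Causal τ) (hf : ∀ x y, GEdge Ω τ x y → f x < f y)
    {j x : ℕ} (hx : x ∈ Lset τ j) (hd : (ev τ x).data ≠ 0) :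
    ∃ a ∈ Lw τ j, (ev τ a).data = (ev τ x).data ∧ f a ≤ f x := by
  cases hop : (ev τ x).op with
  | W => exact ⟨x, ⟨hx, hop⟩, rfl, le_rfl⟩
  | R =>
    obtain h0 | ⟨a, ha, had⟩ := hC j x ⟨hx, hop⟩
    · exact absurd h0 hd
    · exact ⟨a, ha, had, (hf a x (Or.inr ⟨j, ha.1, hx, Or.inl ⟨had, ha.2, hop⟩⟩)).le⟩

lemma isSerialRank_of_gEdge_lt (hΩ : IsWitness Ω) (hU : Unambiguous τ) (hC : Causal τ)
    (hf : ∀ x y, GEdge Ω τ x y → f x < f y) : IsSerialRank τ f := by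
  intro j x hx
  refine ⟨fun hlate => ?_, fun w hw hwx hlast => ?_⟩
  · by_contra hd
    obtain ⟨a, ha, -, hax⟩ := exists_write_le_of_gEdge_lt hC hf hx hd
    exact absurd (hlate a ha) (not_lt.2 hax)
  have hedge : ∀ {y z}, OmegaE Ω τ j y z → f y < f z := fun h => hf _ _ (Or.inr ⟨j, h⟩)
  by_cases hd : (ev τ x).data = 0
  · exact absurd (hedge ⟨hx, hw.1, Or.inr (Or.inl ⟨hd, (hU j w hw).1⟩)⟩) (not_lt.2 hwx)
  obtain ⟨a, ha, had, hax⟩ := exists_write_le_of_gEdge_lt hC hf hx hd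
  rcases eq_or_ne a w with rfl | hne
  · exact had.symm
  rcases (hΩ τ j).2.2.2 a w ha hw hne with haw | hwa
  · exact absurd (hedge ⟨hx, hw.1, Or.inr (Or.inr ⟨a, w, ha, hw, haw, had, rfl⟩)⟩)
      (not_lt.2 hwx)
  · exact absurd (hlast a ha (hedge ⟨hw.1, ha.1, Or.inr (Or.inr ⟨w, a, hw, ha, hwa, rfl, rfl⟩)⟩))
      (not_lt.2 hax)

theorem seqConsistent_of_acyclic (hΩ : IsWitness Ω) (hU : Unambiguous τ) (hC : Causal τ)
    (hAc : Acyclic Ω τ) : SeqConsistent τ := by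
  obtain ⟨f, hbij, hmono⟩ :=
    exists_bijOn_lt_of_acyclic (Finset.Icc 1 τ.length) fun x hx => hAc ⟨x, hx⟩
  rw [coe_Icc, Nat.card_Icc, Nat.add_sub_cancel, ← dom_eq_Icc] at hbij
  have hf : ∀ x y, GEdge Ω τ x y → f x < f y := fun x y h =>
    hmono x y (by simpa [dom_eq_Icc] using h.mem_dom.2) h
  exact ⟨f, _, isSCWitness_invFunOn hbij (fun i u v h => hf u v (Or.inl ⟨i, h⟩))
    (isSerialRank_of_gEdge_lt hΩ hU hC hf)⟩

end Acyclic

section Renaming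

variable {lam : ℕ → ℕ → ℕ}

lemma ev_renameD (hlam : IsRenaming lam) (τ : MTrace) (x : ℕ) :
    ev (renameD lam τ) x = { ev τ x with data := lam (ev τ x).loc (ev τ x).data } := by
  unfold ev renameD
  rw [List.getD_eq_getElem?_getD, List.getD_eq_getElem?_getD, List.getElem?_map]
  rcases Nat.lt_or_ge (x - 1) τ.length with h | h
  · rw [List.getElem?_eq_getElem h]
    rfl
  · rw [List.getElem?_eq_none h]
    show (default : MemEvent) = ⟨MemOp.R, 1, 1, lam 1 0⟩
    rw [hlam 1]
    rfl

lemma SerialFn.renameData {len : ℕ} {e : ℕ → MemEvent} (hS : SerialFn len e)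
    (hlam : IsRenaming lam) :
    SerialFn len fun k => { e k with data := lam (e k).loc (e k).data } := by
  intro u hu1 hu2
  obtain ⟨h1, h2⟩ := hS u hu1 hu2
  refine ⟨fun hnone => ?_, fun k hk1 hku hop hloc hlast => ?_⟩
  · dsimp only at hnone ⊢
    rw [h1 hnone, hlam]
  · dsimp only at hop hloc hlast ⊢
    rw [h2 k hk1 hku hop hloc hlast, hloc]

lemma seqConsistent_renameD (hlam : IsRenaming lam) {τ : MTrace} (h : SeqConsistent τ) :
    SeqConsistent (renameD lam τ) := by
  obtain ⟨f, g, hf, hg, hgf, hfg, hM, hS⟩ := h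
  have hlen : (renameD lam τ).length = τ.length := List.length_map _
  have hDom : Dom (renameD lam τ) = Dom τ := by simp only [Dom, hlen]
  have hMrel : Mrel (renameD lam τ) = Mrel τ := by
    funext i u v
    simp [Mrel, Pset, hDom, ev_renameD hlam]
  refine ⟨f, g, ?_⟩
  rw [IsSCWitness, hDom, hMrel, hlen]
  simp only [ev_renameD hlam]
  exact ⟨hf, hg, hgf, hfg, hM, hS.renameData hlam⟩

end Renaming

theorem sc_iff_witness_acyclic_general
    (n m : ℕ)
    (M : MemSystem n m) (hDI : DataIndependent M) (hC : ∀ τ ∈ M.traces, Causal τ) :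
    (∀ τ ∈ M.traces, SeqConsistent τ) ↔
      (∃ Ω, IsWitness Ω ∧ ∀ τ ∈ M.traces, Unambiguous τ → Acyclic Ω τ) := by
  refine ⟨fun hSC => ⟨rankOrder scRank, isWitness_rankOrder injOn_scRank,
    fun τ hτ hU => acyclic_rankOrder_scRank (hSC τ hτ) hU⟩, ?_⟩
  rintro ⟨Ω, hΩ, hAc⟩ τ ⟨v, hv, hτv⟩
  obtain ⟨τ', lam, hτ', hU, hlam, -, rfl⟩ := (hDI v hv τ).1 hτv
  exact seqConsistent_renameD hlam (seqConsistent_of_acyclic hΩ hU (hC τ' hτ') (hAc τ' hτ' hU))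

/-- For a data independent memory system all of whose traces are causal,
every trace of S(n,m) is sequentially consistent iff there is a witness Ω such that
G(Ω)(τ) is acyclic for every unambiguous trace τ of S(n,m). -/
theorem sc_iff_witness_acyclic
    (n m : ℕ) (hn : 1 ≤ n) (hm : 1 ≤ m)
    (M : MemSystem n m) (hDI : DataIndependent M) (hC : ∀ τ ∈ M.traces, Causal τ) :
    (∀ τ ∈ M.traces, SeqConsistent τ) ↔
      (∃ Ω, IsWitness Ω ∧ ∀ τ ∈ M.traces, Unambiguous τ → Acyclic Ω τ) :=
  sc_iff_witness_acyclic_general n m M hDI hC
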